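/- arXiv:2410.09620 — 3 statements merged into one kernel-verified Lean document; each statement's English description precedes it below -/
import Mathlib

section
/- Let $\lambda,\mu,t>0$ with $\lambda\neq\mu$, set $\beta = e^{-(\mu-\lambda)t}$, $\gamma=\lambda/\mu$, $C_2' = (2\gamma - \beta\gamma - \beta)/(1-\gamma)$ and $C_3' = 2(\beta^2\gamma^2 + \beta^2\gamma + \beta^2 - 3\beta\gamma^2 - 3\beta\gamma + 3\gamma^2)/(1-\gamma)^2$. Then $\gamma$ is a root of the quadratic $X^2(2C_2'^2 + 2C_2' - C_3' + 2) + 2X(C_2'^2 - C_2' - C_3') + 2C_2'^2 - C_3' = 0$, and moreover $\beta = \frac{\gamma(2+C_2') - C_2'}{1+\gamma}$. -/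
theorem stmt2 (lam mu t : ℝ) (hlam : 0 < lam) (hmu : 0 < mu) (ht : 0 < t)
    (hne : lam ≠ mu) :
    let β := Real.exp (-(mu - lam) * t)
    let γ := lam / mu
    let C2' := (2 * γ - β * γ - β) / (1 - γ)
    let C3' := 2 * (β ^ 2 * γ ^ 2 + β ^ 2 * γ + β ^ 2 - 3 * β * γ ^ 2 - 3 * β * γ + 3 * γ ^ 2) /
      (1 - γ) ^ 2
    γ ^ 2 * (2 * C2' ^ 2 + 2 * C2' - C3' + 2) + 2 * γ * (C2' ^ 2 - C2' - C3') +
        2 * C2' ^ 2 - C3' = 0 ∧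
      β = (γ * (2 + C2') - C2') / (1 + γ) := by
  intro β γ C2' C3'
  have hγpos : 0 < γ := div_pos hlam hmu
  have hγ1 : γ ≠ 1 := by
    rw [Ne, div_eq_one_iff_eq hmu.ne']
    exact hne
  have h1γ : 1 - γ ≠ 0 := sub_ne_zero.mpr (Ne.symm hγ1)
  have h1pγ : (1 : ℝ) + γ ≠ 0 := by positivity
  constructor
  · simp only [C2', C3']
    field_simp
    ring
  · simp only [C2', C3']
    field_simp
    ring
end

section
/- Let $\lambda,\mu,t>0$ with $\lambda\neq\mu$, set $\beta = e^{-(\mu-\lambda)t}$ and $\gamma=\lambda/\mu$, and define $C_2'$ and $C_3'$ as in the cumulant formulas: $C_2' = (2\gamma - \beta\gamma - \beta)/(1-\gamma)$, $C_3' = 2(\beta^2\gamma^2 + \beta^2\gamma + \beta^2 - 3\beta\gamma^2 - 3\beta\gamma + 3\gamma^2)/(1-\gamma)^2$. If $\gamma'$ is the other root of the quadratic $X^2(2C_2'^2 + 2C_2' - C_3' + 2) + 2X(C_2'^2 - C_2' - C_3') + 2C_2'^2 - C_3' = 0$ (so $\gamma' = (\beta-\gamma)/(\beta\gamma - 1)$,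 assuming $\beta\gamma \neq 1$), and $\beta' := \frac{\gamma'(2+C_2') - C_2'}{1+\gamma'}$, then it is not the case that both $\gamma' > 0$ and $\beta' > 0$. -/
lemma aux_key (b g : ℝ) (hd3 : 1 - g ≠ 0) (hd : b * g - 1 ≠ 0)
    (hd2 : 1 + (b - g) / (b * g - 1) ≠ 0) :
    ((b - g) / (b * g - 1) * (2 + (2 * g - b * g - b) / (1 - g)) -
      (2 * g - b * g - b) / (1 - g)) / (1 + (b - g) / (b * g - 1)) = -b := by
  rw [div_eq_iff hd2]
  field_simp
  ring

theorem stmt3 (lam mu t : ℝ) (hlam : 0 < lam) (hmu : 0 < mu) (ht : 0 < t)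
    (hne : lam ≠ mu)
    (hβγ : Real.exp (-(mu - lam) * t) * (lam / mu) ≠ 1)
    (hγ' : (Real.exp (-(mu - lam) * t) - lam / mu) /
      (Real.exp (-(mu - lam) * t) * (lam / mu) - 1) ≠ -1) :
    let β := Real.exp (-(mu - lam) * t)
    let γ := lam / mu
    let C2' := (2 * γ - β * γ - β) / (1 - γ)
    let γ' := (β - γ) / (β * γ - 1)
    let β' := (γ' * (2 + C2') - C2') / (1 + γ')
    ¬ (0 < γ' ∧ 0 < β') := by
  intro β γ C2' γ' β'
  rintro ⟨h1, h2⟩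
  have hβpos : 0 < β := Real.exp_pos _
  have hμ : (mu : ℝ) ≠ 0 := hmu.ne'
  have hγ1 : γ ≠ 1 := fun h => hne ((div_eq_one_iff_eq hμ).mp h)
  have hd3 : 1 - γ ≠ 0 := sub_ne_zero.mpr (Ne.symm hγ1)
  have hd : β * γ - 1 ≠ 0 := sub_ne_zero.mpr hβγ
  have hd2 : 1 + γ' ≠ 0 := by
    intro h
    exact hγ' (by simp only [γ', β, γ] at h ⊢; linarith)
  have hkey : β' = -β := aux_key β γ hd3 hd hd2
  rw [hkey] at h2
  linarith
end

section
/- Define, for $\pi_0 \in (0,1)$, $\pi_1 = 1 - \pi_0$, and $s > 0$, the maps $\Phi(\pi_0, s, 0) = (\pi_0 + \pi_1 e^{-s},\ \pi_1(1 - e^{-s}))$ and $\Phi(\pi_0, s, 1) = (\pi_0(1-e^{-s}),\ \pi_1 + \pi_0 e^{-s})$. Then $\Phi$ is not injective on $(0,1) \times (0,\infty) \times \{0,1\}$: there exist $(\pi_0, s, x) \neq (\pi_0', s', x')$ with $\Phi(\pi_0, s, x) = \Phi(\pi_0', s', x')$. -/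
noncomputable def Phi (π0 s : ℝ) (x : Bool) : ℝ × ℝ :=
  if x then (π0 * (1 - Real.exp (-s)), (1 - π0) + π0 * Real.exp (-s))
  else (π0 + (1 - π0) * Real.exp (-s), (1 - π0) * (1 - Real.exp (-s)))

theorem stmt10 :
    ∃ (π0 s : ℝ) (x : Bool) (π0' s' : ℝ) (x' : Bool),
      π0 ∈ Set.Ioo (0:ℝ) 1 ∧ 0 < s ∧ π0' ∈ Set.Ioo (0:ℝ) 1 ∧ 0 < s' ∧
      (π0, s, x) ≠ (π0', s', x') ∧ Phi π0 s x = Phi π0' s' x' := by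
  refine ⟨1/2, Real.log 2, false, 2/3, Real.log 4, false, ⟨by norm_num, by norm_num⟩,
    Real.log_pos (by norm_num), ⟨by norm_num, by norm_num⟩, Real.log_pos (by norm_num),
    ?_, ?_⟩
  · simp only [ne_eq, Prod.mk.injEq]
    norm_num
  · have h2 : Real.exp (-Real.log 2) = 1/2 := by
      rw [Real.exp_neg, Real.exp_log (by norm_num)]; norm_num
    have h4 : Real.exp (-Real.log 4) = 1/4 := by
      rw [Real.exp_neg, Real.exp_log (by norm_num)]; norm_num
    simp [Phi, h2, h4]
    norm_num
end
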